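/- Let F = (AR, att) be an argument graph. For every grounded extension E ∈ gr(F), the set d(E) is a grounded extension of defenses of DG(F), i.e., d(E) ∈ GR(DG(F)). -/

import Mathlib

open Set

/-- An argument graph (argumentation framework): a finite set of arguments
with an attack relation between arguments of the graph. -/
structure AF (A : Type*) where
  AR : Set A
  att : A → A → Prop
  finite : AR.Finite
  att_mem : ∀ a b, att a b → a ∈ AR ∧ b ∈ AR

namespace AF

variable {A : Type*} (F : AF A)

/-- An argument is initial if no argument attacks it. -/
def Initial (a : A) : Prop := ∀ b, ¬ F.att b a

/-- A set of arguments is conflict-free. -/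
def ConflictFree (E : Set A) : Prop :=
  E ⊆ F.AR ∧ ∀ a ∈ E, ∀ b ∈ E, ¬ F.att a b

/-- α is defended by E: every attacker of α is attacked by E. -/
def Defends (E : Set A) (a : A) : Prop :=
  ∀ b, F.att b a → ∃ c ∈ E, F.att c b

def Admissible (E : Set A) : Prop :=
  F.ConflictFree E ∧ ∀ a ∈ E, F.Defends E a

def Complete (E : Set A) : Prop :=
  F.Admissible E ∧ ∀ a ∈ F.AR, F.Defends E a → a ∈ E

/-- The set of complete extensions. -/
def co : Set (Set A) := {E | F.Complete E}

/-- The set of grounded extensions (minimal complete extensions). -/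
def gr : Set (Set A) := {E | F.Complete E ∧ ∀ E', F.Complete E' → E ⊆ E'}

/-- The set of preferred extensions (maximal complete extensions). -/
def pr : Set (Set A) := {E | F.Complete E ∧ ∀ E', F.Complete E' → E ⊆ E' → E = E'}

/-- The set of stable extensions. -/
def st : Set (Set A) :=
  {E | F.ConflictFree E ∧ ∀ a ∈ F.AR, a ∉ E → ∃ b ∈ E, F.att b a}

/-- The set of defenses of `F`.  A defense is either a pair `⟨some α, β⟩` with
`{α, β}` conflict-free and some `γ` with `α→γ` and `γ→β`, or a pair
`⟨none, β⟩` with `β` initial (`none` plays the role of `⌀`). -/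
def nmd : Set (Option A × A) :=
  {p | (∃ α, p.1 = some α ∧ α ∈ F.AR ∧ p.2 ∈ F.AR ∧
          F.ConflictFree {α, p.2} ∧
          ∃ γ, γ ∈ F.AR ∧ F.att α γ ∧ F.att γ p.2)
     ∨ (p.1 = none ∧ p.2 ∈ F.AR ∧ F.Initial p.2)}

/-- The set of defeaters of defenses (DoDs) of `F`. -/
def und : Set (Option A × A) :=
  {p | (∃ α, p.1 = some α ∧ α ∈ F.AR ∧ p.2 ∈ F.AR ∧
          ¬ F.ConflictFree {α, p.2} ∧
          ∃ γ, γ ∈ F.AR ∧ γ ≠ α ∧ γ ≠ p.2 ∧ F.att α γ ∧ F.att γ p.2)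
     ∨ (p.1 = none ∧ p.2 ∈ F.AR ∧
          (F.att p.2 p.2 ∨ ∃ γ, F.att γ γ ∧ F.att γ p.2))}

/-- Nodes of the defense graph: defenses together with their defeaters. -/
def dgn : Set (Option A × A) := F.nmd ∪ F.und

/-- Lifting of the attack relation to `Option`: conditions mentioning `⌀` are false. -/
def oatt (x y : Option A) : Prop := ∃ a b, x = some a ∧ y = some b ∧ F.att a b

/-- The attack relation `→d` of the defense graph:
`[x,α] →d [y,β]` iff `x→y`, `x→β`, `α→y` or `α→β`. -/
def dAtt (p q : Option A × A) : Prop :=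
  F.oatt p.1 q.1 ∨ F.oatt p.1 (some q.2) ∨ F.oatt (some p.2) q.1 ∨ F.att p.2 q.2

/-- Conflict-freeness of a set of defenses. -/
def DConflictFree (D : Set (Option A × A)) : Prop :=
  D ⊆ F.nmd ∧ ∀ X ∈ D, ∀ Y ∈ D, ¬ F.dAtt X Y

/-- A defense X is defended by D in the defense graph. -/
def DDefends (D : Set (Option A × A)) (X : Option A × A) : Prop :=
  ∀ Y ∈ F.dgn, F.dAtt Y X → ∃ Z ∈ D, F.dAtt Z Y

def DAdmissible (D : Set (Option A × A)) : Prop :=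
  F.DConflictFree D ∧ ∀ X ∈ D, F.DDefends D X

def DComplete (D : Set (Option A × A)) : Prop :=
  F.DAdmissible D ∧ ∀ X ∈ F.nmd, F.DDefends D X → X ∈ D

/-- Complete extensions of defenses of the defense graph DG(F). -/
def CO : Set (Set (Option A × A)) := {D | F.DComplete D}

/-- Grounded extensions of defenses (minimal complete extensions of defenses). -/
def GR : Set (Set (Option A × A)) :=
  {D | F.DComplete D ∧ ∀ D', F.DComplete D' → D ⊆ D'}

/-- Preferred extensions of defenses (maximal complete extensions of defenses). -/
def PR : Set (Set (Option A × A)) :=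
  {D | F.DComplete D ∧ ∀ D', F.DComplete D' → D ⊆ D' → D = D'}

/-- Stable extensions of defenses. -/
def ST : Set (Set (Option A × A)) :=
  {D | F.DConflictFree D ∧ ∀ X ∈ F.dgn, X ∉ D → ∃ Z ∈ D, F.dAtt Z X}

/-- `def(D)`: the defendees and defenders occurring in `D`. -/
def defSet (D : Set (Option A × A)) : Set A :=
  {a | a ∈ F.AR ∧ ((∃ x, (x, a) ∈ D) ∨ (∃ b, ((some a : Option A), b) ∈ D))}

/-- `d(E) = {⟨x,y⟩ ∈ nmd(F) : x ∈ E ∪ {⌀} and y ∈ E}`. -/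
def dE (E : Set A) : Set (Option A × A) :=
  {p | p ∈ F.nmd ∧ (p.1 = none ∨ ∃ a ∈ E, p.1 = some a) ∧ p.2 ∈ E}

/-- The arguments occurring in some defeater of defenses of `F`. -/
def argUnd : Set A :=
  {a | a ∈ F.AR ∧ ((∃ b, ((some a : Option A), b) ∈ F.und) ∨ ∃ x, (x, a) ∈ F.und)}

/-- The c-kernel of `F`. -/
def ck : AF A where
  AR := F.AR
  att a b := F.att a b ∧ ¬(a ≠ b ∧ F.att a a ∧ F.att b b)
  finite := F.finite
  att_mem a b h := F.att_mem a b h.1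

/-- Union of two argument graphs. -/
def union (F G : AF A) : AF A where
  AR := F.AR ∪ G.AR
  att a b := F.att a b ∨ G.att a b
  finite := F.finite.union G.finite
  att_mem a b h := by
    rcases h with h | h
    · exact ⟨Or.inl (F.att_mem a b h).1, Or.inl (F.att_mem a b h).2⟩
    · exact ⟨Or.inr (G.att_mem a b h).1, Or.inr (G.att_mem a b h).2⟩

/-- A set of defenses `D` regarded as a binary relation on `AR ∪ {⌀}`. -/
def dRel (D : Set (Option A × A)) : Option A → Option A → Prop :=
  fun x y => ∃ b, y = some b ∧ (x, b) ∈ D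

/-- The root reason `RR(α, D)` of `α` w.r.t. an extension of defenses `D`,
where `D⁺` is the transitive closure of `D`. -/
def RR (α : A) (D : Set (Option A × A)) : Set (Option A) :=
  {x | (F.Initial α ∧ x = none) ∨
       (¬ F.Initial α ∧ ∃ β, x = some β ∧ β ∈ F.AR ∧
         ((Relation.TransGen (dRel D) (some β) (some β) ∧ β = α) ∨
          (Relation.TransGen (dRel D) (some β) (some α) ∧
            (Relation.TransGen (dRel D) (some β) (some β) ∨ F.Initial β))))}

/-- The set of root reasons for accepting `α` under complete defense semantics. -/
def rrCO (α : A) : Set (Set (Option A)) :=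
  {S | ∃ D ∈ F.CO, S = F.RR α D}

end AF

/-!
Write `args D` for the arguments occurring in the pairs of a set of defenses `D`. An attack
`Y →d X` is just an attack in `F` from an argument of `Y` to an argument of `X`, so `D` defends
`X` in `DG(F)` as soon as `args D` defends every argument of `X` in `F`. For a complete `E`,
every member of `E` heads a defense built from `E`, so `args (d(E)) = E` and admissibility of
`E` transfers to `d(E)`. Conversely, if `d(E)` defends a defense `X` and `a` attacks an argument
of `X`, then either `⟨⌀, a⟩` is a node of `DG(F)`, or `a` has an attacker `b` and every
`⟨y, a⟩` with `y → b` is a node; these nodes attack `X`, and the counter-attacks of `d(E)` show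
that `E` attacks `a`, possibly by accepting `b`, which `E` then defends. For minimality, `E` is
the least fixed point of the characteristic function, and for a complete extension of defenses
`D` the members of `E` occurring in `D` and defended by `args D` form a prefixed point of it.
-/

namespace AF

variable {A : Type*} {F : AF A}

theorem Defends.mono {S T : Set A} {a : A} (h : S ⊆ T) (hd : F.Defends S a) :
    F.Defends T a :=
  fun b hb => (hd b hb).imp fun _ hc => ⟨h hc.1, hc.2⟩

theorem ConflictFree.subset {S T : Set A} (hS : F.ConflictFree S) (h : T ⊆ S) :
    F.ConflictFree T :=
  ⟨h.trans hS.1, fun a ha b hb => hS.2 a (h ha) b (h hb)⟩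

variable (F) in
def characteristic : Set A →o Set A where
  toFun S := {a | a ∈ F.AR ∧ F.Defends S a}
  monotone' _ _ h _ ha := ⟨ha.1, ha.2.mono h⟩

theorem Complete.characteristic_subset {E : Set A} (hE : F.Complete E) :
    F.characteristic E ⊆ E :=
  fun a ha => hE.2 a ha.1 ha.2

theorem eq_lfp_characteristic_of_mem_gr {E : Set A} (hE : E ∈ F.gr) :
    E = F.characteristic.lfp := by
  set L := F.characteristic.lfp
  have hLE : L ⊆ E := OrderHom.lfp_le _ hE.1.characteristic_subset
  have hfix : F.characteristic L = L := F.characteristic.map_lfp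
  refine subset_antisymm (hE.2 L ⟨⟨hE.1.1.1.subset hLE, fun a ha => ?_⟩, fun a ha hd => ?_⟩) hLE
  · rw [← hfix] at ha
    exact ha.2
  · rw [← hfix]
    exact ⟨ha, hd⟩

def argsOf (p : Option A × A) : Set A := {e | p.1 = some e ∨ p.2 = e}

def args (D : Set (Option A × A)) : Set A := ⋃ Z ∈ D, argsOf Z

theorem mem_args {D : Set (Option A × A)} {a : A} : a ∈ args D ↔ ∃ Z ∈ D, a ∈ argsOf Z := by
  simp [args]

theorem argsOf_none (a : A) : argsOf ((none, a) : Option A × A) = {a} := by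
  ext; simp [argsOf, eq_comm]

theorem dAtt_iff {p q : Option A × A} :
    F.dAtt p q ↔ ∃ e ∈ argsOf p, ∃ w ∈ argsOf q, F.att e w := by
  obtain ⟨x, a⟩ := p
  obtain ⟨y, b⟩ := q
  cases x <;> cases y <;> simp [dAtt, oatt, argsOf, or_assoc]

theorem mem_dE_iff {E : Set A} {X : Option A × A} :
    X ∈ F.dE E ↔ X ∈ F.nmd ∧ argsOf X ⊆ E := by
  obtain ⟨x, a⟩ := X
  cases x <;> simp [dE, argsOf, Set.subset_def, or_imp, forall_and]
  tauto

theorem argsOf_subset_of_mem_nmd {X : Option A × A} (hX : X ∈ F.nmd) : argsOf X ⊆ F.AR := by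
  rintro c (hc | rfl)
  · obtain ⟨α, h1, hα, -⟩ | ⟨h1, -⟩ := hX
    · exact Option.some_inj.1 (hc.symm.trans h1) ▸ hα
    · simp [h1] at hc
  · obtain ⟨-, -, -, h2, -⟩ | ⟨-, h2, -⟩ := hX <;> exact h2

theorem exists_mem_nmd_of_defends {S : Set A} {a : A} (hS : F.ConflictFree S) (ha : a ∈ S)
    (hd : F.Defends S a) : ∃ X ∈ F.nmd, a ∈ argsOf X ∧ argsOf X ⊆ S := by
  by_cases hinit : F.Initial a
  · exact ⟨(none, a), Or.inr ⟨rfl, hS.1 ha, hinit⟩, by simp [argsOf_none, ha]⟩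
  obtain ⟨b, hba⟩ : ∃ b, F.att b a := by simpa [Initial] using hinit
  obtain ⟨c, hc, hcb⟩ := hd b hba
  have hcf : F.ConflictFree {c, a} := hS.subset (by simp [Set.insert_subset_iff, hc, ha])
  refine ⟨(some c, a), Or.inl ⟨c, rfl, hS.1 hc, hS.1 ha, hcf, b, (F.att_mem b a hba).1, hcb, hba⟩,
    Or.inr rfl, ?_⟩
  rintro w (hw | rfl)
  · rwa [← Option.some_inj.1 hw]
  · exact ha

theorem mem_dgn_none {a : A} (ha : a ∈ F.AR)
    (h : F.Initial a ∨ F.att a a ∨ ∃ s, F.att s s ∧ F.att s a) : (none, a) ∈ F.dgn := by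
  rcases h with h | h
  · exact Or.inl (Or.inr ⟨rfl, ha, h⟩)
  · exact Or.inr (Or.inr ⟨rfl, ha, h⟩)

theorem mem_dgn_some {y b a : A} (hyb : F.att y b) (hba : F.att b a) (hne_y : b ≠ y)
    (hne_a : b ≠ a) : (some y, a) ∈ F.dgn := by
  have hy := (F.att_mem y b hyb).1
  have hb := (F.att_mem b a hba).1
  have ha := (F.att_mem b a hba).2
  by_cases hcf : F.ConflictFree {y, a}
  · exact Or.inl (Or.inl ⟨y, rfl, hy, ha, hcf, b, hb, hyb, hba⟩)
  · exact Or.inr (Or.inl ⟨y, rfl, hy, ha, hcf, b, hb, hne_y, hne_a, hyb, hba⟩)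

theorem dDefends_of_forall_defends {D : Set (Option A × A)} {X : Option A × A}
    (h : ∀ w ∈ argsOf X, F.Defends (args D) w) : F.DDefends D X := by
  intro Y _ hYX
  obtain ⟨e, he, w, hw, hew⟩ := dAtt_iff.1 hYX
  obtain ⟨c, hc, hce⟩ := h w hw e hew
  obtain ⟨Z, hZ, hcZ⟩ := mem_args.1 hc
  exact ⟨Z, hZ, dAtt_iff.2 ⟨c, hcZ, e, he, hce⟩⟩

theorem defends_of_dDefends {D : Set (Option A × A)} {X : Option A × A} {c : A}
    (hclosed : ∀ b ∈ F.AR, F.Defends (args D) b → b ∈ args D) (hX : F.DDefends D X)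
    (hc : c ∈ argsOf X) : F.Defends (args D) c := by
  intro a hac
  have hattacked : ∀ Y ∈ F.dgn, a ∈ argsOf Y → ∃ e ∈ args D, ∃ w ∈ argsOf Y, F.att e w := by
    intro Y hY haY
    obtain ⟨Z, hZ, hZY⟩ := hX Y hY (dAtt_iff.2 ⟨a, haY, c, hc, hac⟩)
    obtain ⟨e, he, w, hw, hew⟩ := dAtt_iff.1 hZY
    exact ⟨e, mem_args.2 ⟨Z, hZ, he⟩, w, hw, hew⟩
  by_cases hnone : F.Initial a ∨ F.att a a ∨ ∃ s, F.att s s ∧ F.att s a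
  · obtain ⟨e, he, w, hw, hew⟩ :=
      hattacked _ (mem_dgn_none (F.att_mem a c hac).1 hnone) (by simp [argsOf_none])
    rw [argsOf_none, Set.mem_singleton_iff] at hw
    exact ⟨e, he, hw ▸ hew⟩
  simp only [Initial, not_or, not_forall, not_not, not_exists, not_and] at hnone
  obtain ⟨⟨b, hba⟩, haa, hself⟩ := hnone
  by_contra hna
  simp only [not_exists, not_and] at hna
  have hb : F.Defends (args D) b := by
    intro y hyb
    have hY := mem_dgn_some hyb hba (by rintro rfl; exact hself b hyb hba)
      (by rintro rfl; exact haa hba)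
    obtain ⟨e, he, w, hw | rfl, hew⟩ := hattacked _ hY (Or.inr rfl)
    · exact ⟨e, he, Option.some_inj.1 hw ▸ hew⟩
    · exact absurd hew (hna e he)
  exact hna b (hclosed b (F.att_mem b a hba).1 hb) hba

theorem args_dE {E : Set A} (hE : F.Admissible E) : args (F.dE E) = E := by
  refine subset_antisymm (fun a ha => ?_) (fun a ha => ?_)
  · obtain ⟨Z, hZ, haZ⟩ := mem_args.1 ha
    exact (mem_dE_iff.1 hZ).2 haZ
  · obtain ⟨X, hX, haX, hXE⟩ := exists_mem_nmd_of_defends hE.1 ha (hE.2 a ha)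
    exact mem_args.2 ⟨X, mem_dE_iff.2 ⟨hX, hXE⟩, haX⟩

theorem Complete.dComplete_dE {E : Set A} (hE : F.Complete E) : F.DComplete (F.dE E) := by
  have hargs := args_dE hE.1
  refine ⟨⟨⟨fun X hX => (mem_dE_iff.1 hX).1, fun X hX Y hY hXY => ?_⟩, fun X hX => ?_⟩,
    fun X hX hdef => ?_⟩
  · obtain ⟨e, he, w, hw, hew⟩ := dAtt_iff.1 hXY
    exact hE.1.1.2 e ((mem_dE_iff.1 hX).2 he) w ((mem_dE_iff.1 hY).2 hw) hew
  · refine dDefends_of_forall_defends fun w hw => ?_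
    rw [hargs]
    exact hE.1.2 w ((mem_dE_iff.1 hX).2 hw)
  · refine mem_dE_iff.2 ⟨hX, fun c hc => ?_⟩
    have hdefc := defends_of_dDefends (by rw [hargs]; exact hE.2) hdef hc
    rw [hargs] at hdefc
    exact hE.2 c (argsOf_subset_of_mem_nmd hX hc) hdefc

theorem dE_subset_of_dComplete {E : Set A} (hE : E ∈ F.gr) {D : Set (Option A × A)}
    (hD : F.DComplete D) : F.dE E ⊆ D := by
  set P := {a ∈ E | a ∈ args D ∧ F.Defends (args D) a}
  have hP : F.characteristic P ⊆ P := by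
    rintro a ⟨haAR, haP⟩
    have haE : a ∈ E := hE.1.2 a haAR (haP.mono fun _ h => h.1)
    have haD : F.Defends (args D) a := haP.mono fun _ h => h.2.1
    have hcf : F.ConflictFree (insert a P) :=
      hE.1.1.1.subset (Set.insert_subset haE fun _ h => h.1)
    obtain ⟨X, hX, haX, hXP⟩ :=
      exists_mem_nmd_of_defends hcf (Set.mem_insert a P) (haP.mono (Set.subset_insert a P))
    have hXD : X ∈ D := by
      refine hD.2 X hX (dDefends_of_forall_defends fun w hw => ?_)
      rcases hXP hw with rfl | hwP
      exacts [haD, hwP.2.2]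
    exact ⟨haE, mem_args.2 ⟨X, hXD, haX⟩, haD⟩
  have hEP : E ⊆ P := (eq_lfp_characteristic_of_mem_gr hE).trans_le (OrderHom.lfp_le _ hP)
  intro X hX
  obtain ⟨hXnmd, hXE⟩ := mem_dE_iff.1 hX
  exact hD.2 X hXnmd (dDefends_of_forall_defends fun w hw => (hEP (hXE hw)).2.2)

end AF

/-- for every grounded extension `E` of `F`,
`d(E)` is a grounded extension of defenses of the defense graph of `F`. -/
theorem statement7 {A : Type*} (F : AF A) (E : Set A)
    (hE : E ∈ F.gr) : F.dE E ∈ F.GR :=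
  ⟨hE.1.dComplete_dE, fun _ hD => AF.dE_subset_of_dComplete hE hD⟩
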